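/- For every n ≥ 5, the largest eigenvalue λ = λ1(Γ1) of the signed graph Γ1 of order n is a root of the cubic polynomial x^3 + (5−n)x^2 + (5−2n)x + (n−5), and it satisfies n − 3 < λ < n − 2. -/

import Mathlib

open scoped BigOperators

/-- A signed graph on the vertex set `Fin n`: a simple graph together with a
symmetric `±1` sign on each edge. -/
structure SignedGraph (n : ℕ) where
  G : SimpleGraph (Fin n)
  sign : Fin n → Fin n → ℤ
  sign_symm : ∀ i j, sign i j = sign j i
  sign_pm : ∀ i j, G.Adj i j → sign i j = 1 ∨ sign i j = -1

namespace SignedGraph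

variable {n : ℕ}

open Classical in
/-- The adjacency matrix of a signed graph, as a real matrix. -/
noncomputable def adjMatrix (Γ : SignedGraph n) : Matrix (Fin n) (Fin n) ℝ :=
  fun i j => if Γ.G.Adj i j then (Γ.sign i j : ℝ) else 0

/-- The largest eigenvalue (the index) of a signed graph. -/
noncomputable def lambda1 (Γ : SignedGraph n) : ℝ :=
  sSup (spectrum ℝ Γ.adjMatrix)

/-- The sign of an unordered edge. -/
def signEdge (Γ : SignedGraph n) : Sym2 (Fin n) → ℤ :=
  Sym2.lift ⟨Γ.sign, Γ.sign_symm⟩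

/-- The sign of a walk: the product of the signs of its edges. -/
def walkSign (Γ : SignedGraph n) {u v : Fin n} (w : Γ.G.Walk u v) : ℤ :=
  (w.edges.map Γ.signEdge).prod

/-- A negative cycle: a cycle whose sign is `-1`
(equivalently, with an odd number of negative edges). -/
def IsNegCycle (Γ : SignedGraph n) {u : Fin n} (c : Γ.G.Walk u u) : Prop :=
  c.IsCycle ∧ Γ.walkSign c = -1

/-- A signed graph is unbalanced if it contains a negative cycle. -/
def Unbalanced (Γ : SignedGraph n) : Prop :=
  ∃ (u : Fin n) (c : Γ.G.Walk u u), Γ.IsNegCycle c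

/-- A signed graph is negative-`C₄`-free if it contains no negative 4-cycle. -/
def NegC4Free (Γ : SignedGraph n) : Prop :=
  ∀ (u : Fin n) (c : Γ.G.Walk u u), c.IsCycle → c.length = 4 → Γ.walkSign c ≠ -1

end SignedGraph

/-- The signed graph `Γ₁`: vertices `2,…,n-1` induce an all-positive complete
graph, vertices `0` and `1` are joined to each other by a negative edge and to
vertex `2` by positive edges, and have no other neighbours. -/
def Gamma1 (n : ℕ) : SignedGraph n where
  G :=
    { Adj := fun i j => i ≠ j ∧ (2 ≤ min i.val j.val ∨ max i.val j.val ≤ 2)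
      symm := by
        constructor
        intro i j h
        refine ⟨Ne.symm h.1, ?_⟩
        rw [min_comm, max_comm]
        exact h.2
      loopless := by constructor; intro i h; exact h.1 rfl }
  sign := fun i j =>
    if (i.val = 0 ∧ j.val = 1) ∨ (i.val = 1 ∧ j.val = 0) then -1 else 1
  sign_symm := by
    intro i j
    by_cases h : (i.val = 0 ∧ j.val = 1) ∨ (i.val = 1 ∧ j.val = 0)
    · rw [if_pos h, if_pos (by tauto)]
    · rw [if_neg h, if_neg (by tauto)]
  sign_pm := by
    intro i j _
    by_cases h : (i.val = 0 ∧ j.val = 1) ∨ (i.val = 1 ∧ j.val = 0)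
    · rw [if_pos h]; right; rfl
    · rw [if_neg h]; left; rfl

/-- The signed graph `Γ₂`: vertices `4,…,n-1` induce an all-positive complete
graph, vertices `2` and `3` are joined by positive edges to all of `4,…,n-1`
(but not to each other), vertices `0` and `1` are joined to each other by a
negative edge and to `2` and `3` by positive edges, and have no other
neighbours. -/
def Gamma2 (n : ℕ) : SignedGraph n where
  G :=
    { Adj := fun i j => i ≠ j ∧
        ((i.val ≤ 1 ∧ j.val ≤ 3) ∨ (j.val ≤ 1 ∧ i.val ≤ 3) ∨
         (2 ≤ i.val ∧ i.val ≤ 3 ∧ 4 ≤ j.val) ∨ (2 ≤ j.val ∧ j.val ≤ 3 ∧ 4 ≤ i.val) ∨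
         (4 ≤ i.val ∧ 4 ≤ j.val))
      symm := by
        constructor
        intro i j h
        exact ⟨Ne.symm h.1, by tauto⟩
      loopless := by constructor; intro i h; exact h.1 rfl }
  sign := fun i j =>
    if (i.val = 0 ∧ j.val = 1) ∨ (i.val = 1 ∧ j.val = 0) then -1 else 1
  sign_symm := by
    intro i j
    by_cases h : (i.val = 0 ∧ j.val = 1) ∨ (i.val = 1 ∧ j.val = 0)
    · rw [if_pos h, if_pos (by tauto)]
    · rw [if_neg h, if_neg (by tauto)]
  sign_pm := by
    intro i j _
    by_cases h : (i.val = 0 ∧ j.val = 1) ∨ (i.val = 1 ∧ j.val = 0)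
    · rw [if_pos h]; right; rfl
    · rw [if_neg h]; left; rfl


/-- The all-negative complete signed graph `(K_n, -)`. -/
def NegKn (n : ℕ) : SignedGraph n where
  G := ⊤
  sign := fun _ _ => -1
  sign_symm := fun _ _ => rfl
  sign_pm := fun _ _ _ => Or.inr rfl

/-- `Γ` is switching equivalent to `Γ'` (up to a relabelling of the vertices):
there is a bijection of the vertices matching the underlying graphs and a
`±1`-valued switching function `s` relating the two sign functions. -/
def SwitchingEquiv {n : ℕ} (Γ Γ' : SignedGraph n) : Prop :=
  ∃ e : Fin n ≃ Fin n, ∃ s : Fin n → ℤ, (∀ i, s i = 1 ∨ s i = -1) ∧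
    (∀ i j, Γ.G.Adj i j ↔ Γ'.G.Adj (e i) (e j)) ∧
    (∀ i j, Γ.G.Adj i j → Γ.sign i j = s i * Γ'.sign (e i) (e j) * s j)

/-!
Let `p` be the cubic, `m = n - 3` the number of clique vertices other than `v₃`, and `x` an
eigenvector for an eigenvalue `L ≠ ±1`. The rows of `v₁` and `v₂` force `x₁ = x₂`, and
summing the rows of the `m` clique vertices reduces the eigenvalue equations to
`x₁ · p(L) = 0` with `x₁ ≠ 0`; conversely every root `L ≠ -1` of `p` has an explicit
eigenvector. Since `p(n - 3) = -2` and
`p(x) = (x - (n - 2))(x² + 3x + n - 1) + (n - 3)(n + 1)`, the cubic has a root in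
`(n - 3, n - 2)` and is positive from `n - 2` on. That root is an eigenvalue, so
`λ₁ > n - 3 > 1`, hence `p(λ₁) = 0` and `λ₁ < n - 2`.
-/

open Matrix Finset

theorem Matrix.mem_spectrum_iff_exists_mulVec_eq_smul {K ι : Type*} [Field K] [Fintype ι]
    [DecidableEq ι] (A : Matrix ι ι K) (μ : K) :
    μ ∈ spectrum K A ↔ ∃ v ≠ 0, A *ᵥ v = μ • v := by
  rw [← spectrum_toLin', ← Module.End.hasEigenvalue_iff_mem_spectrum]
  constructor
  · intro h
    obtain ⟨v, hv_mem, hv_ne⟩ := h.exists_hasEigenvector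
    exact ⟨v, hv_ne, Module.End.mem_eigenspace_iff.mp hv_mem⟩
  · rintro ⟨v, hv_ne, hv⟩
    exact Module.End.hasEigenvalue_of_hasEigenvector (x := v)
      ⟨Module.End.mem_eigenspace_iff.mpr hv, hv_ne⟩

namespace SignedGraph

variable {n : ℕ} (Γ : SignedGraph n)

theorem lambda1_mem_spectrum (h : (spectrum ℝ Γ.adjMatrix).Nonempty) :
    Γ.lambda1 ∈ spectrum ℝ Γ.adjMatrix :=
  h.csSup_mem (Matrix.finite_spectrum _)

theorem le_lambda1 {μ : ℝ} (h : μ ∈ spectrum ℝ Γ.adjMatrix) : μ ≤ Γ.lambda1 :=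
  le_csSup (Matrix.finite_spectrum _).bddAbove h

end SignedGraph

namespace Gamma1

/-- The cubic factor of the characteristic polynomial of `Γ₁` on `N` vertices. -/
def cubic (N x : ℝ) : ℝ := x ^ 3 + (5 - N) * x ^ 2 + (5 - 2 * N) * x + (N - 5)

theorem cubic_eq_mul_add (N x : ℝ) :
    cubic N x = (x - (N - 2)) * (x ^ 2 + 3 * x + (N - 1)) + (N - 3) * (N + 1) := by
  unfold cubic; ring

theorem cubic_pos {N x : ℝ} (hN : 3 < N) (hx : N - 2 ≤ x) : 0 < cubic N x := by
  rw [cubic_eq_mul_add]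
  have hprod : 0 ≤ (x - (N - 2)) * (x ^ 2 + 3 * x + (N - 1)) :=
    mul_nonneg (by linarith) (by nlinarith)
  nlinarith

theorem exists_cubic_eq_zero {N : ℝ} (hN : 3 < N) :
    ∃ x ∈ Set.Ioo (N - 3) (N - 2), cubic N x = 0 := by
  have hcont : ContinuousOn (cubic N) (Set.Icc (N - 3) (N - 2)) := by
    unfold cubic; fun_prop
  apply intermediate_value_Ioo (by linarith) hcont
  constructor
  · unfold cubic; nlinarith
  · rw [cubic_eq_mul_add]; nlinarith

variable {m : ℕ}

theorem adjMatrix_apply {n : ℕ} (i j : Fin n) :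
    (Gamma1 n).adjMatrix i j =
      if i.val ≠ j.val ∧ (2 ≤ min i.val j.val ∨ max i.val j.val ≤ 2) then
        (if (i.val = 0 ∧ j.val = 1) ∨ (i.val = 1 ∧ j.val = 0) then -1 else 1)
      else 0 := by
  simp only [SignedGraph.adjMatrix, Gamma1, Fin.val_ne_iff]
  split_ifs <;> simp_all

theorem mulVec_apply_zero (v : Fin (m + 3) → ℝ) :
    ((Gamma1 (m + 3)).adjMatrix *ᵥ v) 0 = -v 1 + v 2 := by
  simp [mulVec, dotProduct, Fin.sum_univ_succ, adjMatrix_apply]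

theorem mulVec_apply_one (v : Fin (m + 3) → ℝ) :
    ((Gamma1 (m + 3)).adjMatrix *ᵥ v) 1 = -v 0 + v 2 := by
  simp [mulVec, dotProduct, Fin.sum_univ_succ, adjMatrix_apply]

theorem mulVec_apply_two (v : Fin (m + 3) → ℝ) :
    ((Gamma1 (m + 3)).adjMatrix *ᵥ v) 2 = v 0 + v 1 + ∑ k : Fin m, v k.succ.succ.succ := by
  simp [mulVec, dotProduct, Fin.sum_univ_succ, adjMatrix_apply,
    Nat.mod_eq_of_lt (show 2 < m + 3 by omega), add_assoc]

theorem mulVec_apply_tail (v : Fin (m + 3) → ℝ) (k : Fin m) :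
    ((Gamma1 (m + 3)).adjMatrix *ᵥ v) k.succ.succ.succ =
      v 2 + (∑ l : Fin m, v l.succ.succ.succ - v k.succ.succ.succ) := by
  simp only [mulVec, dotProduct, Fin.sum_univ_succ]
  simp [adjMatrix_apply, Nat.mod_eq_of_lt (show 2 < m + 3 by omega), sum_ite, Fin.val_inj,
    filter_ne, sum_erase_eq_sub]

theorem mulVec_eq_smul_iff (v : Fin (m + 3) → ℝ) (L : ℝ) :
    (Gamma1 (m + 3)).adjMatrix *ᵥ v = L • v ↔
      -v 1 + v 2 = L * v 0 ∧ -v 0 + v 2 = L * v 1 ∧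
      v 0 + v 1 + ∑ l : Fin m, v l.succ.succ.succ = L * v 2 ∧
      ∀ k : Fin m, v 2 + (∑ l : Fin m, v l.succ.succ.succ - v k.succ.succ.succ) =
        L * v k.succ.succ.succ := by
  constructor
  · intro h
    have row (i : Fin (m + 3)) := congrFun h i
    simp only [Pi.smul_apply, smul_eq_mul] at row
    refine ⟨?_, ?_, ?_, fun k => ?_⟩
    · rw [← mulVec_apply_zero, row]
    · rw [← mulVec_apply_one, row]
    · rw [← mulVec_apply_two, row]
    · rw [← mulVec_apply_tail, row]
  · rintro ⟨h0, h1, h2, htail⟩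
    funext i
    rw [Pi.smul_apply, smul_eq_mul]
    refine Fin.cases ?_ (Fin.cases ?_ (Fin.cases ?_ fun k => ?_)) i
    · rw [mulVec_apply_zero, h0]
    · rw [Fin.succ_zero_eq_one, mulVec_apply_one, h1]
    · rw [Fin.succ_zero_eq_one, Fin.succ_one_eq_two, mulVec_apply_two, h2]
    · rw [mulVec_apply_tail, htail]

theorem cubic_eq_zero_of_mem_spectrum {L : ℝ} (hL : L ∈ spectrum ℝ (Gamma1 (m + 3)).adjMatrix)
    (h1 : L ≠ 1) (h2 : L ≠ -1) : cubic ((m + 3 : ℕ) : ℝ) L = 0 := by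
  obtain ⟨v, hv_ne, hv⟩ := (mem_spectrum_iff_exists_mulVec_eq_smul _ _).mp hL
  obtain ⟨e0, e1, e2, etail⟩ := (mulVec_eq_smul_iff v L).mp hv
  set T := ∑ l : Fin m, v l.succ.succ.succ
  have h01 : v 1 = v 0 := by
    have : (L - 1) * (v 0 - v 1) = 0 := by linear_combination e1 - e0
    linarith [(mul_eq_zero.mp this).resolve_left (sub_ne_zero.mpr h1)]
  have hv2 : v 2 = (L + 1) * v 0 := by linear_combination e0 + h01
  have hT : T = (L ^ 2 + L - 2) * v 0 := by linear_combination e2 + L * hv2 - h01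
  have hsum : m * (v 2 + T) - T = L * T := by
    have := sum_congr rfl fun k (_ : k ∈ univ) => etail k
    simp only [sum_add_distrib, sum_sub_distrib, sum_const, card_univ, Fintype.card_fin,
      nsmul_eq_mul, ← mul_sum] at this
    linear_combination this
  have h0 : v 0 ≠ 0 := by
    intro h0
    have htail (k : Fin m) : v k.succ.succ.succ = 0 := by
      have : (L + 1) * v k.succ.succ.succ = 0 := by
        linear_combination -etail k + hv2 + hT + (L ^ 2 + 2 * L - 1) * h0
      exact (mul_eq_zero.mp this).resolve_left fun h => h2 (by linarith)
    refine hv_ne (funext fun i => Fin.cases ?_ (Fin.cases ?_ (Fin.cases ?_ htail)) i)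
    · exact h0
    · simp [h01, h0]
    · simp [hv2, h0]
  have key : v 0 * cubic ((m + 3 : ℕ) : ℝ) L = 0 := by
    rw [hv2, hT] at hsum
    unfold cubic
    push_cast
    linear_combination -hsum
  exact (mul_eq_zero.mp key).resolve_left h0

theorem mem_spectrum_of_cubic_eq_zero {L : ℝ} (hL : cubic ((m + 3 : ℕ) : ℝ) L = 0)
    (h : L ≠ -1) : L ∈ spectrum ℝ (Gamma1 (m + 3)).adjMatrix := by
  rw [mem_spectrum_iff_exists_mulVec_eq_smul]
  -- the eigenvector forced by `cubic_eq_zero_of_mem_spectrum`, scaled so that `v 0 = L + 1`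
  let v : Fin (m + 3) → ℝ :=
    Fin.cons (L + 1) (Fin.cons (L + 1) (Fin.cons ((L + 1) ^ 2) fun _ => L ^ 2 + 2 * L - 1))
  have hv0 : v 0 = L + 1 := rfl
  have hv1 : v 1 = L + 1 := rfl
  have hv2 : v 2 = (L + 1) ^ 2 := rfl
  have hvtail (k : Fin m) : v k.succ.succ.succ = L ^ 2 + 2 * L - 1 := rfl
  refine ⟨v, fun hv => h ?_, (mulVec_eq_smul_iff v L).mpr ⟨?_, ?_, ?_, fun k => ?_⟩⟩
  · have := congrFun hv 0
    rw [hv0, Pi.zero_apply] at this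
    linarith
  · rw [hv1, hv2, hv0]; ring
  · rw [hv0, hv2, hv1]; ring
  all_goals
    unfold cubic at hL
    push_cast at hL
    simp only [hv0, hv1, hv2, hvtail, sum_const, card_univ, Fintype.card_fin, nsmul_eq_mul]
    linear_combination -hL

end Gamma1

theorem lambda1_Gamma1_cubic (n : ℕ) (hn : 5 ≤ n) :
    (Gamma1 n).lambda1 ^ 3 + (5 - (n : ℝ)) * (Gamma1 n).lambda1 ^ 2
        + (5 - 2 * (n : ℝ)) * (Gamma1 n).lambda1 + ((n : ℝ) - 5) = 0 ∧
      (n : ℝ) - 3 < (Gamma1 n).lambda1 ∧ (Gamma1 n).lambda1 < (n : ℝ) - 2 := by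
  obtain ⟨m, rfl⟩ : ∃ m, n = m + 3 := ⟨n - 3, by omega⟩
  have hN : (5 : ℝ) ≤ ((m + 3 : ℕ) : ℝ) := by exact_mod_cast hn
  obtain ⟨μ, ⟨hμ_gt, -⟩, hμ⟩ := Gamma1.exists_cubic_eq_zero (by linarith)
  have hμ_mem := Gamma1.mem_spectrum_of_cubic_eq_zero hμ (by linarith)
  set Γ := Gamma1 (m + 3)
  have hgt : ((m + 3 : ℕ) : ℝ) - 3 < Γ.lambda1 := hμ_gt.trans_le (Γ.le_lambda1 hμ_mem)
  have hroot : Gamma1.cubic ((m + 3 : ℕ) : ℝ) Γ.lambda1 = 0 :=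
    Gamma1.cubic_eq_zero_of_mem_spectrum (Γ.lambda1_mem_spectrum ⟨μ, hμ_mem⟩)
      (by linarith) (by linarith)
  exact ⟨hroot, hgt, lt_of_not_ge fun hle => (Gamma1.cubic_pos (by linarith) hle).ne' hroot⟩
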